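/- For π/2 < α < 2π/3, the diagonal of a spherical square with interior angle α is strictly less than π. -/
import Mathlib


open Real

/-- For `π/2 < α < 2π/3`, the diagonal
`d(α) = arccos ((cos⁴(α/2) − cos² α)/sin⁴(α/2))` of a spherical square with interior
angle `α` is strictly less than `π`. -/
theorem spherical_square_diagonal_lt_pi (α : ℝ)
    (hα₁ : π / 2 < α) (hα₂ : α < 2 * π / 3) :
    Real.arccos ((Real.cos (α / 2) ^ 4 - Real.cos α ^ 2) / Real.sin (α / 2) ^ 4) < π := by
  have hπ := Real.pi_pos
  have h1 : (0:ℝ) < α / 2 := by linarith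
  have h2 : α / 2 < π / 2 := by linarith
  have hs : 0 < Real.sin (α / 2) := Real.sin_pos_of_pos_of_lt_pi h1 (by linarith)
  have hc : 0 < Real.cos (α / 2) := Real.cos_pos_of_mem_Ioo ⟨by linarith, h2⟩
  have hpyth0 : Real.sin (α / 2) ^ 2 + Real.cos (α / 2) ^ 2 = 1 :=
    Real.sin_sq_add_cos_sq _
  have hc1 : Real.cos (α / 2) < 1 := by nlinarith
  have hca : Real.cos α = 2 * Real.cos (α / 2) ^ 2 - 1 := by
    have h := Real.cos_two_mul (α / 2)
    rw [show 2 * (α / 2) = α by ring] at h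
    exact h
  have hpyth : Real.sin (α / 2) ^ 2 + Real.cos (α / 2) ^ 2 = 1 :=
    Real.sin_sq_add_cos_sq _
  have key : -1 < (Real.cos (α / 2) ^ 4 - Real.cos α ^ 2) / Real.sin (α / 2) ^ 4 := by
    rw [lt_div_iff₀ (by positivity), hca]
    nlinarith [sq_nonneg (Real.cos (α/2)), sq_nonneg (Real.sin (α/2)),
      mul_pos hc (sub_pos.mpr hc1), sq_nonneg (Real.sin (α/2) * Real.cos (α/2))]
  refine lt_of_le_of_ne (Real.arccos_le_pi _) fun h => ?_
  have := Real.arccos_eq_pi.mp h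
  linarith
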